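/- The union of the maps α_m (0 ≤ m ≤ p) covers the prism: Δ^p × [0,1] = ⋃_{m=0}^{p} α_m(Δ^{p+1}), where α_m : Δ^{p+1} → Δ^p × [0,1] is defined by α_m(x) = (ζ_m(x), Σ_{i=m+1}^{p+1} xᵢ). -/

import Mathlib

/-!
Write `T k = ∑_{i ≥ k} y_i` for `y ∈ Δ^p`; then `T 0 = 1 ≥ t ≥ 0 = T (p + 1)`, so some `m` has
`T (m + 1) ≤ t ≤ T m`. Splitting `y_m` into the two nonnegative pieces `T m - t` and
`t - T (m + 1)`, placed at positions `m` and `m + 1`, gives `x ∈ Δ^{p+1}` with `ζ_m x = y` and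
tail sum `t`. Conversely `ζ_m` preserves coordinate sums and a tail sum of a point of a simplex
lies in `[0, 1]`.
-/

open Finset

namespace PrismTriangulation

variable {M : Type*} {n p : ℕ}

/-- `ζ_m`, which merges the coordinates `m` and `m + 1`. -/
def degeneracy [Add M] (m : Fin (p + 1)) (x : Fin (p + 2) → M) (i : Fin (p + 1)) : M :=
  if (i : ℕ) < (m : ℕ) then x i.castSucc
  else if i = m then x i.castSucc + x i.succ
  else x i.succ

/-- The second component of `α_m` is `tailSum (m + 1)`. -/
def tailSum [AddCommMonoid M] (k : ℕ) (x : Fin n → M) : M :=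
  ∑ i ∈ univ.filter (fun i : Fin n => k ≤ (i : ℕ)), x i

section AddCommMonoid

variable [AddCommMonoid M]

theorem degeneracy_eq_comp_succAbove_add_single (m : Fin (p + 1)) (x : Fin (p + 2) → M) :
    degeneracy m x = x ∘ m.succ.succAbove + Pi.single m (x m.succ) := by
  funext i
  rcases lt_trichotomy i m with h | rfl | h
  · simp [degeneracy, h, h.ne, Fin.succAbove_of_castSucc_lt, h.le]
  · simp [degeneracy, Fin.succAbove_of_castSucc_lt]
  · simp [degeneracy, h.ne', not_lt.2 h.le, Fin.succAbove_of_le_castSucc, h]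

theorem sum_degeneracy (m : Fin (p + 1)) (x : Fin (p + 2) → M) :
    ∑ i, degeneracy m x i = ∑ i, x i := by
  rw [degeneracy_eq_comp_succAbove_add_single, Fin.sum_univ_succAbove x m.succ]
  simp [sum_add_distrib, add_comm]

theorem degeneracy_insertNth (m : Fin (p + 1)) (s : M) (z : Fin (p + 1) → M) :
    degeneracy m (Fin.insertNth m.succ s z) = z + Pi.single m s := by
  simp [degeneracy_eq_comp_succAbove_add_single, Fin.insertNth_comp_succAbove]

theorem tailSum_zero (x : Fin n → M) : tailSum 0 x = ∑ i, x i := by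
  simp [tailSum]

theorem tailSum_eq_zero_of_le {k : ℕ} (h : n ≤ k) (x : Fin n → M) : tailSum k x = 0 := by
  refine sum_eq_zero fun i hi => ?_
  have := (mem_filter.1 hi).2
  omega

theorem tailSum_eq_add_tailSum_succ (x : Fin n → M) (m : Fin n) :
    tailSum m x = x m + tailSum (m + 1) x := by
  have : univ.filter (fun i : Fin n => (m : ℕ) ≤ i) =
      insert m (univ.filter (fun i : Fin n => (m : ℕ) + 1 ≤ i)) := by
    ext i; simp only [mem_filter, mem_insert, mem_univ, true_and, Fin.ext_iff]; omega
  rw [tailSum, this, sum_insert (by simp)]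
  rfl

theorem tailSum_insertNth (m : Fin (p + 1)) (s : M) (z : Fin (p + 1) → M) :
    tailSum (m + 1) (Fin.insertNth m.succ s z) = s + tailSum (m + 1) z := by
  simp only [tailSum, sum_filter]
  rw [Fin.sum_univ_succAbove _ m.succ]
  congr 1
  · simp
  · refine sum_congr rfl fun i _ => ?_
    have key : (m : ℕ) + 1 ≤ m.succ.succAbove i ↔ (m : ℕ) + 1 ≤ i := by
      rcases le_or_gt i m with h | h
      · rw [Fin.succAbove_succ_of_le _ _ h, Fin.val_castSucc]
      · rw [Fin.succAbove_succ_of_lt _ _ h, Fin.val_succ]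
        exact iff_of_true (by omega) (by omega)
    rw [Fin.insertNth_apply_succAbove, if_congr key rfl rfl]

end AddCommMonoid

section Order

variable [AddCommMonoid M] [PartialOrder M] [IsOrderedAddMonoid M]

theorem tailSum_nonneg {x : Fin n → M} (hx : ∀ i, 0 ≤ x i) (k : ℕ) : 0 ≤ tailSum k x :=
  sum_nonneg fun i _ => hx i

theorem tailSum_le_sum {x : Fin n → M} (hx : ∀ i, 0 ≤ x i) (k : ℕ) : tailSum k x ≤ ∑ i, x i :=
  sum_le_sum_of_subset_of_nonneg (filter_subset _ _) fun i _ _ => hx i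

end Order

theorem exists_apply_succ_le_and_le_apply {α : Type*} [LinearOrder α] (f : ℕ → α) {t : α} {n : ℕ}
    (h0 : t ≤ f 0) (hn : f (n + 1) ≤ t) : ∃ m ≤ n, f (m + 1) ≤ t ∧ t ≤ f m := by
  induction n with
  | zero => exact ⟨0, le_rfl, hn, h0⟩
  | succ n ih =>
    by_cases h : t ≤ f (n + 1)
    · exact ⟨n + 1, le_rfl, hn, h⟩
    · obtain ⟨m, hm, hm'⟩ := ih (le_of_not_ge h)
      exact ⟨m, hm.trans n.le_succ, hm'⟩

section Simplex

variable {𝕜 : Type*}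

theorem degeneracy_mem_stdSimplex [Semiring 𝕜] [PartialOrder 𝕜] [IsOrderedRing 𝕜]
    (m : Fin (p + 1)) {x : Fin (p + 2) → 𝕜} (hx : x ∈ stdSimplex 𝕜 (Fin (p + 2))) :
    degeneracy m x ∈ stdSimplex 𝕜 (Fin (p + 1)) := by
  refine ⟨fun i => ?_, by rw [sum_degeneracy]; exact hx.2⟩
  unfold degeneracy
  split_ifs
  exacts [hx.1 _, add_nonneg (hx.1 _) (hx.1 _), hx.1 _]

theorem tailSum_mem_Icc [Semiring 𝕜] [PartialOrder 𝕜] [IsOrderedRing 𝕜] {x : Fin n → 𝕜}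
    (hx : x ∈ stdSimplex 𝕜 (Fin n)) (k : ℕ) : tailSum k x ∈ Set.Icc 0 1 :=
  ⟨tailSum_nonneg hx.1 k, hx.2 ▸ tailSum_le_sum hx.1 k⟩

theorem exists_degeneracy_eq_and_tailSum_eq [Ring 𝕜] [LinearOrder 𝕜] [IsStrictOrderedRing 𝕜]
    {y : Fin (p + 1) → 𝕜} (hy : y ∈ stdSimplex 𝕜 (Fin (p + 1))) {t : 𝕜} (ht : t ∈ Set.Icc 0 1) :
    ∃ m : Fin (p + 1), ∃ x ∈ stdSimplex 𝕜 (Fin (p + 2)),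
      degeneracy m x = y ∧ tailSum ((m : ℕ) + 1) x = t := by
  obtain ⟨k, hkp, hlow, hhigh⟩ := exists_apply_succ_le_and_le_apply (fun k => tailSum k y) (t := t)
    (by rw [tailSum_zero, hy.2]; exact ht.2) (by rw [tailSum_eq_zero_of_le le_rfl]; exact ht.1)
  obtain ⟨m, rfl⟩ : ∃ m : Fin (p + 1), (m : ℕ) = k := ⟨⟨k, by omega⟩, rfl⟩
  set s := t - tailSum (m + 1) y
  have hs : 0 ≤ s := sub_nonneg.2 hlow
  have hsy : s ≤ y m := by
    rw [tailSum_eq_add_tailSum_succ y m] at hhigh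
    exact sub_le_iff_le_add.2 hhigh
  have hz : tailSum (m + 1) (y - Pi.single m s) = tailSum (m + 1) y := by
    refine sum_congr rfl fun i hi => ?_
    have him : i ≠ m := fun h => by subst h; simp at hi
    simp [him]
  refine ⟨m, Fin.insertNth m.succ s (y - Pi.single m s), ⟨?_, ?_⟩, ?_, ?_⟩
  · refine (Fin.forall_iff_succAbove m.succ).2 ⟨by simpa, fun i => ?_⟩
    rw [Fin.insertNth_apply_succAbove]
    rcases eq_or_ne i m with rfl | h
    · simpa using hsy
    · simpa [h] using hy.1 i
  · rw [Fin.sum_insertNth]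
    simp only [Pi.sub_apply]
    rw [sum_sub_distrib, hy.2]
    simp
  · rw [degeneracy_insertNth, sub_add_cancel]
  · rw [tailSum_insertNth, hz, sub_add_cancel]

end Simplex

theorem stdSimplex_prod_Icc_eq_iUnion_image (p : ℕ) :
    stdSimplex ℝ (Fin (p + 1)) ×ˢ Set.Icc (0 : ℝ) 1 =
      ⋃ m : Fin (p + 1), (fun x => (degeneracy m x, tailSum ((m : ℕ) + 1) x)) ''
        stdSimplex ℝ (Fin (p + 2)) := by
  ext ⟨y, t⟩
  simp only [Set.mem_prod, Set.mem_iUnion, Set.mem_image, Prod.mk.injEq]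
  constructor
  · rintro ⟨hy, ht⟩
    exact exists_degeneracy_eq_and_tailSum_eq hy ht
  · rintro ⟨m, x, hx, rfl, rfl⟩
    exact ⟨degeneracy_mem_stdSimplex m hx, tailSum_mem_Icc hx _⟩

end PrismTriangulation

/-- The images of the prism triangulation maps `α_m` (`0 ≤ m ≤ p`) cover the prism
`Δ^p × [0,1]`. -/
theorem prism_triangulation_covers (p : ℕ) :
    let ζ : Fin (p+1) → (Fin (p+2) → ℝ) → (Fin (p+1) → ℝ) := fun m x i =>
      if (i : ℕ) < (m : ℕ) then x i.castSucc
      else if i = m then x i.castSucc + x i.succ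
      else x i.succ
    let S : Fin (p+1) → (Fin (p+2) → ℝ) → ℝ := fun m x =>
      ∑ i ∈ Finset.univ.filter (fun i : Fin (p+2) => (m : ℕ) + 1 ≤ (i : ℕ)), x i
    (stdSimplex ℝ (Fin (p+1))) ×ˢ (Set.Icc (0:ℝ) 1) =
      ⋃ m : Fin (p+1), (fun x => (ζ m x, S m x)) '' stdSimplex ℝ (Fin (p+2)) :=
  PrismTriangulation.stdSimplex_prod_Icc_eq_iUnion_image p
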